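/- For each n ≥ 1, the function σ_n: ℝ≥0 → ℝ≥0 defined by σ_n(δ) = sup over finite 𝒰 and p(u,x₁ⁿ,x₂ⁿ) with I(X₁ⁿ;X₂ⁿ|U) ≤ nδ of (1/n)I(X₁ⁿ,X₂ⁿ;Yⁿ|U) is concave on ℝ≥0. -/
import Mathlib


open scoped BigOperators Classical

/-- Probability that the random variable `A` takes the value `a`, under the pmf `p`
on a finite sample space `Ω`. -/
noncomputable def prOf {Ω α : Type*} [Fintype Ω] (p : Ω → ℝ) (A : Ω → α) (a : α) : ℝ :=
  ∑ ω, if A ω = a then p ω else 0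

/-- `p` is a probability mass function on the finite type `Ω`. -/
def IsPmf {Ω : Type*} [Fintype Ω] (p : Ω → ℝ) : Prop :=
  (∀ ω, 0 ≤ p ω) ∧ ∑ ω, p ω = 1

/-- Mutual information `I(A;B)` (base-2 logarithm) of random variables `A, B`
on a finite probability space `(Ω, p)`. -/
noncomputable def mutualInfo {Ω α β : Type*} [Fintype Ω] [Fintype α] [Fintype β]
    (p : Ω → ℝ) (A : Ω → α) (B : Ω → β) : ℝ :=
  ∑ a, ∑ b, prOf p (fun ω => (A ω, B ω)) (a, b) *
    Real.logb 2 (prOf p (fun ω => (A ω, B ω)) (a, b) / (prOf p A a * prOf p B b))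

/-- Conditional mutual information `I(A;B|C)` (base-2 logarithm). -/
noncomputable def condMutualInfo {Ω α β γ : Type*} [Fintype Ω] [Fintype α] [Fintype β]
    [Fintype γ] (p : Ω → ℝ) (A : Ω → α) (B : Ω → β) (C : Ω → γ) : ℝ :=
  ∑ a, ∑ b, ∑ c, prOf p (fun ω => (A ω, B ω, C ω)) (a, b, c) *
    Real.logb 2 (prOf p (fun ω => (A ω, B ω, C ω)) (a, b, c) * prOf p C c /
      (prOf p (fun ω => (A ω, C ω)) (a, c) * prOf p (fun ω => (B ω, C ω)) (b, c)))


variable {Ω α β γ : Type*} [Fintype Ω]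

lemma prOf_nonneg {p : Ω → ℝ} (hp : ∀ ω, 0 ≤ p ω) (A : Ω → α) (a : α) : 0 ≤ prOf p A a := by
  apply Finset.sum_nonneg; intro ω _; split <;> simp [hp ω]
lemma prOf_le_one {p : Ω → ℝ} (hp : IsPmf p) (A : Ω → α) (a : α) : prOf p A a ≤ 1 := by
  rw [← hp.2]; apply Finset.sum_le_sum; intro ω _; split <;> simp [hp.1 ω]
lemma prOf_mono {p : Ω → ℝ} (hp : ∀ ω, 0 ≤ p ω) {A : Ω → α} {B : Ω → β} {a : α} {b : β}
    (h : ∀ ω, A ω = a → B ω = b) : prOf p A a ≤ prOf p B b := by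
  apply Finset.sum_le_sum; intro ω _
  by_cases hA : A ω = a
  · simp [hA, h ω hA]
  · simp only [if_neg hA]; split <;> simp [hp ω]
lemma sum_prOf {p : Ω → ℝ} (hp : IsPmf p) (A : Ω → α) [Fintype α] :
    ∑ a, prOf p A a = 1 := by
  rw [← hp.2]; unfold prOf; rw [Finset.sum_comm]
  apply Finset.sum_congr rfl; intro ω _; simp [Finset.sum_ite_eq]
lemma sum_prOf_pair {p : Ω → ℝ} (A : Ω → α) (D : Ω → β) [Fintype α] (d : β) :
    ∑ a, prOf p (fun ω => (A ω, D ω)) (a, d) = prOf p D d := by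
  unfold prOf; rw [Finset.sum_comm]
  apply Finset.sum_congr rfl; intro ω _
  by_cases hD : D ω = d
  · simp [Prod.ext_iff, hD, Finset.sum_ite_eq]
  · simp [Prod.ext_iff, hD]

lemma condMutualInfo_le_card [Fintype α] [Fintype β] [Fintype γ]
    {p : Ω → ℝ} (hp : IsPmf p) (A : Ω → α) (B : Ω → β) (C : Ω → γ) :
    condMutualInfo p A B C ≤ (Fintype.card β : ℝ) / Real.log 2 := by
  have hlog2 : 0 < Real.log 2 := Real.log_pos (by norm_num)
  unfold condMutualInfo
  rw [Finset.sum_comm]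
  have key : ∀ b : β, ∑ a, ∑ c, prOf p (fun ω => (A ω, B ω, C ω)) (a, b, c) *
      Real.logb 2 (prOf p (fun ω => (A ω, B ω, C ω)) (a, b, c) * prOf p C c /
        (prOf p (fun ω => (A ω, C ω)) (a, c) * prOf p (fun ω => (B ω, C ω)) (b, c)))
      ≤ 1 / Real.log 2 := by
    intro b
    rw [Finset.sum_comm]
    have step1 : ∀ c : γ, ∑ a, prOf p (fun ω => (A ω, B ω, C ω)) (a, b, c) *
        Real.logb 2 (prOf p (fun ω => (A ω, B ω, C ω)) (a, b, c) * prOf p C c /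
          (prOf p (fun ω => (A ω, C ω)) (a, c) * prOf p (fun ω => (B ω, C ω)) (b, c)))
        ≤ prOf p C c / Real.log 2 := by
      intro c
      set Q := prOf p C c with hQdef
      set S := prOf p (fun ω => (B ω, C ω)) (b, c) with hSdef
      have hQ0 : 0 ≤ Q := prOf_nonneg hp.1 _ _
      have hS0 : 0 ≤ S := prOf_nonneg hp.1 _ _
      have hSQ : S ≤ Q := prOf_mono hp.1 (by intro ω h; simp [Prod.ext_iff] at h ⊢; exact h.2)
      -- bound each term by P * logb (Q / S)
      have hterm : ∀ a : α, prOf p (fun ω => (A ω, B ω, C ω)) (a, b, c) *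
          Real.logb 2 (prOf p (fun ω => (A ω, B ω, C ω)) (a, b, c) * Q /
            (prOf p (fun ω => (A ω, C ω)) (a, c) * S))
          ≤ prOf p (fun ω => (A ω, B ω, C ω)) (a, b, c) * Real.logb 2 (Q / S) := by
        intro a
        set P := prOf p (fun ω => (A ω, B ω, C ω)) (a, b, c) with hPdef
        set R := prOf p (fun ω => (A ω, C ω)) (a, c) with hRdef
        have hP0 : 0 ≤ P := prOf_nonneg hp.1 _ _
        rcases eq_or_lt_of_le hP0 with hP | hP
        · simp [← hP]
        have hPR : P ≤ R := prOf_mono hp.1 (by intro ω h; simp [Prod.ext_iff] at h ⊢; exact ⟨h.1, h.2.2⟩)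
        have hPS : P ≤ S := prOf_mono hp.1 (by intro ω h; simp [Prod.ext_iff] at h ⊢; exact h.2)
        have hR : 0 < R := lt_of_lt_of_le hP hPR
        have hS : 0 < S := lt_of_lt_of_le hP hPS
        have hQ : 0 < Q := lt_of_lt_of_le hS hSQ
        have hratio : P * Q / (R * S) ≤ Q / S := by
          rw [div_le_div_iff₀ (by positivity) (by positivity)]
          nlinarith [mul_le_mul_of_nonneg_left hPR (mul_nonneg hQ0 hS0)]
        have hratpos : 0 < P * Q / (R * S) := by positivity
        exact mul_le_mul_of_nonneg_left
          ((Real.logb_le_logb (by norm_num) hratpos (by positivity)).2 hratio) hP0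
      calc ∑ a, prOf p (fun ω => (A ω, B ω, C ω)) (a, b, c) *
            Real.logb 2 (prOf p (fun ω => (A ω, B ω, C ω)) (a, b, c) * Q /
              (prOf p (fun ω => (A ω, C ω)) (a, c) * S))
          ≤ ∑ a, prOf p (fun ω => (A ω, B ω, C ω)) (a, b, c) * Real.logb 2 (Q / S) :=
            Finset.sum_le_sum (fun a _ => hterm a)
        _ = S * Real.logb 2 (Q / S) := by
            rw [← Finset.sum_mul, sum_prOf_pair]
        _ ≤ Q / Real.log 2 := by
            rcases eq_or_lt_of_le hS0 with hS | hS
            · simp [← hS]; positivity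
            have hQ : 0 < Q := lt_of_lt_of_le hS hSQ
            have hlog : Real.log (Q / S) ≤ Q / S - 1 :=
              Real.log_le_sub_one_of_pos (by positivity)
            have e : S * (Q / S) = Q := by field_simp
            have h2 : S * Real.log (Q / S) ≤ Q := by
              nlinarith [mul_le_mul_of_nonneg_left hlog hS0]
            calc S * Real.logb 2 (Q / S) = (S * Real.log (Q / S)) / Real.log 2 := by
                  rw [Real.logb]; ring
              _ ≤ Q / Real.log 2 := by gcongr
    calc ∑ c, ∑ a, prOf p (fun ω => (A ω, B ω, C ω)) (a, b, c) *
          Real.logb 2 _ ≤ ∑ c, prOf p C c / Real.log 2 := by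
            apply Finset.sum_le_sum; intro c _; exact step1 c
      _ = (∑ c, prOf p C c) / Real.log 2 := by rw [Finset.sum_div]
      _ = 1 / Real.log 2 := by rw [sum_prOf hp]
  calc ∑ b, ∑ a, ∑ c, prOf p (fun ω => (A ω, B ω, C ω)) (a, b, c) *
        Real.logb 2 (prOf p (fun ω => (A ω, B ω, C ω)) (a, b, c) * prOf p C c /
          (prOf p (fun ω => (A ω, C ω)) (a, c) * prOf p (fun ω => (B ω, C ω)) (b, c)))
      ≤ ∑ _b : β, 1 / Real.log 2 := Finset.sum_le_sum (fun b _ => key b)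
    _ = (Fintype.card β : ℝ) / Real.log 2 := by
        rw [Finset.sum_const, Finset.card_univ, nsmul_eq_mul]; ring


section Mix
variable {T : Type*} [Fintype T] {ka kb : ℕ}

noncomputable def mixP (la lb : ℝ) (pa : Fin ka × T → ℝ) (pb : Fin kb × T → ℝ) :
    Fin (ka + kb) × T → ℝ :=
  fun z => if h : (z.1 : ℕ) < ka then la * pa (⟨z.1.1, h⟩, z.2)
    else lb * pb (⟨z.1.1 - ka, by have := z.1.isLt; omega⟩, z.2)

variable (la lb : ℝ) (pa : Fin ka × T → ℝ) (pb : Fin kb × T → ℝ)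

lemma prOf_fst_eval {k : ℕ} (p : Fin k × T → ℝ) (c : Fin k) :
    prOf p (fun z => z.1) c = ∑ t, p (c, t) := by
  unfold prOf
  rw [Fintype.sum_prod_type, Finset.sum_comm]
  apply Finset.sum_congr rfl; intro t _
  rw [Finset.sum_eq_single_of_mem c (Finset.mem_univ c)]
  · simp
  · intro x _ hx; simp [hx]

lemma prOf_pair_eval {k : ℕ} {α : Type*} (p : Fin k × T → ℝ) (F : T → α) (a : α) (c : Fin k) :
    prOf p (fun z => (F z.2, z.1)) (a, c) = ∑ t, if F t = a then p (c, t) else 0 := by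
  unfold prOf
  rw [Fintype.sum_prod_type, Finset.sum_comm]
  apply Finset.sum_congr rfl; intro t _
  by_cases hF : F t = a
  · simp [Prod.ext_iff, hF, Finset.sum_ite_eq']
  · simp [Prod.ext_iff, hF]

lemma prOf_triple_eval {k : ℕ} {α β : Type*} (p : Fin k × T → ℝ) (A : T → α) (B : T → β)
    (a : α) (b : β) (c : Fin k) :
    prOf p (fun z => (A z.2, B z.2, z.1)) (a, b, c) =
      ∑ t, if A t = a ∧ B t = b then p (c, t) else 0 := by
  unfold prOf
  rw [Fintype.sum_prod_type, Finset.sum_comm]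
  apply Finset.sum_congr rfl; intro t _
  by_cases hF : A t = a ∧ B t = b
  · simp [Prod.ext_iff, hF.1, hF.2, Finset.sum_ite_eq']
  · rw [Finset.sum_eq_zero, if_neg hF]
    intro c' _
    rw [if_neg]
    simp only [Prod.ext_iff]
    tauto

lemma mixP_castAdd (i : Fin ka) (t : T) :
    mixP la lb pa pb (Fin.castAdd kb i, t) = la * pa (i, t) := by
  simp only [mixP]
  rw [dif_pos (by simpa using i.isLt)]
  congr 2 <;> simp [Fin.ext_iff]

lemma mixP_natAdd (j : Fin kb) (t : T) :
    mixP la lb pa pb (Fin.natAdd ka j, t) = lb * pb (j, t) := by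
  simp only [mixP]
  rw [dif_neg (by simp)]
  congr 2 <;> simp [Fin.ext_iff]

end Mix

section Mix2
variable {T : Type*} [Fintype T] {ka kb : ℕ} (la lb : ℝ) (pa : Fin ka × T → ℝ) (pb : Fin kb × T → ℝ)

lemma prOf_mixP_fst_castAdd (i : Fin ka) :
    prOf (mixP la lb pa pb) (fun z => z.1) (Fin.castAdd kb i)
      = la * prOf pa (fun z => z.1) i := by
  rw [prOf_fst_eval, prOf_fst_eval, Finset.mul_sum]
  exact Finset.sum_congr rfl fun t _ => mixP_castAdd la lb pa pb i t

lemma prOf_mixP_fst_natAdd (j : Fin kb) :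
    prOf (mixP la lb pa pb) (fun z => z.1) (Fin.natAdd ka j)
      = lb * prOf pb (fun z => z.1) j := by
  rw [prOf_fst_eval, prOf_fst_eval, Finset.mul_sum]
  exact Finset.sum_congr rfl fun t _ => mixP_natAdd la lb pa pb j t

lemma prOf_mixP_pair_castAdd {α : Type*} (F : T → α) (a : α) (i : Fin ka) :
    prOf (mixP la lb pa pb) (fun z => (F z.2, z.1)) (a, Fin.castAdd kb i)
      = la * prOf pa (fun z => (F z.2, z.1)) (a, i) := by
  rw [prOf_pair_eval, prOf_pair_eval, Finset.mul_sum]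
  refine Finset.sum_congr rfl fun t _ => ?_
  split
  · exact mixP_castAdd la lb pa pb i t
  · simp

lemma prOf_mixP_pair_natAdd {α : Type*} (F : T → α) (a : α) (j : Fin kb) :
    prOf (mixP la lb pa pb) (fun z => (F z.2, z.1)) (a, Fin.natAdd ka j)
      = lb * prOf pb (fun z => (F z.2, z.1)) (a, j) := by
  rw [prOf_pair_eval, prOf_pair_eval, Finset.mul_sum]
  refine Finset.sum_congr rfl fun t _ => ?_
  split
  · exact mixP_natAdd la lb pa pb j t
  · simp

lemma prOf_mixP_triple_castAdd {α β : Type*} (A : T → α) (B : T → β) (a : α) (b : β) (i : Fin ka) :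
    prOf (mixP la lb pa pb) (fun z => (A z.2, B z.2, z.1)) (a, b, Fin.castAdd kb i)
      = la * prOf pa (fun z => (A z.2, B z.2, z.1)) (a, b, i) := by
  rw [prOf_triple_eval, prOf_triple_eval, Finset.mul_sum]
  refine Finset.sum_congr rfl fun t _ => ?_
  split
  · exact mixP_castAdd la lb pa pb i t
  · simp

lemma prOf_mixP_triple_natAdd {α β : Type*} (A : T → α) (B : T → β) (a : α) (b : β) (j : Fin kb) :
    prOf (mixP la lb pa pb) (fun z => (A z.2, B z.2, z.1)) (a, b, Fin.natAdd ka j)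
      = lb * prOf pb (fun z => (A z.2, B z.2, z.1)) (a, b, j) := by
  rw [prOf_triple_eval, prOf_triple_eval, Finset.mul_sum]
  refine Finset.sum_congr rfl fun t _ => ?_
  split
  · exact mixP_natAdd la lb pa pb j t
  · simp

lemma isPmf_mixP (hla : 0 ≤ la) (hlb : 0 ≤ lb) (hsum : la + lb = 1)
    (hpa : IsPmf pa) (hpb : IsPmf pb) : IsPmf (mixP la lb pa pb) := by
  constructor
  · intro z
    unfold mixP
    split
    · exact mul_nonneg hla (hpa.1 _)
    · exact mul_nonneg hlb (hpb.1 _)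
  · rw [Fintype.sum_prod_type, Fin.sum_univ_add]
    have h1 : ∑ i : Fin ka, ∑ t, mixP la lb pa pb (Fin.castAdd kb i, t) = la := by
      have : ∀ i : Fin ka, ∑ t, mixP la lb pa pb (Fin.castAdd kb i, t)
          = la * ∑ t, pa (i, t) := by
        intro i; rw [Finset.mul_sum]; exact Finset.sum_congr rfl fun t _ => mixP_castAdd ..
      rw [Finset.sum_congr rfl fun i _ => this i, ← Finset.mul_sum, ← Fintype.sum_prod_type,
        hpa.2, mul_one]
    have h2 : ∑ j : Fin kb, ∑ t, mixP la lb pa pb (Fin.natAdd ka j, t) = lb := by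
      have : ∀ j : Fin kb, ∑ t, mixP la lb pa pb (Fin.natAdd ka j, t)
          = lb * ∑ t, pb (j, t) := by
        intro j; rw [Finset.mul_sum]; exact Finset.sum_congr rfl fun t _ => mixP_natAdd ..
      rw [Finset.sum_congr rfl fun j _ => this j, ← Finset.mul_sum, ← Fintype.sum_prod_type,
        hpb.2, mul_one]
    rw [h1, h2, hsum]

lemma condMutualInfo_mixP {α β : Type*} [Fintype α] [Fintype β] (A : T → α) (B : T → β) :
    condMutualInfo (mixP la lb pa pb) (fun z => A z.2) (fun z => B z.2) (fun z => z.1)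
      = la * condMutualInfo pa (fun z => A z.2) (fun z => B z.2) (fun z => z.1)
      + lb * condMutualInfo pb (fun z => A z.2) (fun z => B z.2) (fun z => z.1) := by
  unfold condMutualInfo
  have main : ∀ (a : α) (b : β),
      (∑ c : Fin (ka + kb), prOf (mixP la lb pa pb) (fun z => (A z.2, B z.2, z.1)) (a, b, c) *
        Real.logb 2 (prOf (mixP la lb pa pb) (fun z => (A z.2, B z.2, z.1)) (a, b, c) *
            prOf (mixP la lb pa pb) (fun z => z.1) c /
          (prOf (mixP la lb pa pb) (fun z => (A z.2, z.1)) (a, c) *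
            prOf (mixP la lb pa pb) (fun z => (B z.2, z.1)) (b, c))))
      = la * (∑ c : Fin ka, prOf pa (fun z => (A z.2, B z.2, z.1)) (a, b, c) *
          Real.logb 2 (prOf pa (fun z => (A z.2, B z.2, z.1)) (a, b, c) *
              prOf pa (fun z => z.1) c /
            (prOf pa (fun z => (A z.2, z.1)) (a, c) * prOf pa (fun z => (B z.2, z.1)) (b, c))))
        + lb * (∑ c : Fin kb, prOf pb (fun z => (A z.2, B z.2, z.1)) (a, b, c) *
          Real.logb 2 (prOf pb (fun z => (A z.2, B z.2, z.1)) (a, b, c) *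
              prOf pb (fun z => z.1) c /
            (prOf pb (fun z => (A z.2, z.1)) (a, c) * prOf pb (fun z => (B z.2, z.1)) (b, c)))) := by
    intro a b
    rw [Fin.sum_univ_add, Finset.mul_sum, Finset.mul_sum]
    congr 1
    · refine Finset.sum_congr rfl fun i _ => ?_
      rw [prOf_mixP_triple_castAdd, prOf_mixP_fst_castAdd, prOf_mixP_pair_castAdd,
        prOf_mixP_pair_castAdd]
      by_cases hla0 : la = 0
      · simp [hla0]
      · have hr : la * prOf pa (fun z => (A z.2, B z.2, z.1)) (a, b, i) *
            (la * prOf pa (fun z => z.1) i) /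
            (la * prOf pa (fun z => (A z.2, z.1)) (a, i) *
              (la * prOf pa (fun z => (B z.2, z.1)) (b, i)))
            = prOf pa (fun z => (A z.2, B z.2, z.1)) (a, b, i) * prOf pa (fun z => z.1) i /
              (prOf pa (fun z => (A z.2, z.1)) (a, i) * prOf pa (fun z => (B z.2, z.1)) (b, i)) := by
          rw [mul_mul_mul_comm, mul_mul_mul_comm la _ la]
          exact mul_div_mul_left _ _ (mul_ne_zero hla0 hla0)
        rw [hr]; ring
    · refine Finset.sum_congr rfl fun j _ => ?_
      rw [prOf_mixP_triple_natAdd, prOf_mixP_fst_natAdd, prOf_mixP_pair_natAdd,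
        prOf_mixP_pair_natAdd]
      by_cases hlb0 : lb = 0
      · simp [hlb0]
      · have hr : lb * prOf pb (fun z => (A z.2, B z.2, z.1)) (a, b, j) *
            (lb * prOf pb (fun z => z.1) j) /
            (lb * prOf pb (fun z => (A z.2, z.1)) (a, j) *
              (lb * prOf pb (fun z => (B z.2, z.1)) (b, j)))
            = prOf pb (fun z => (A z.2, B z.2, z.1)) (a, b, j) * prOf pb (fun z => z.1) j /
              (prOf pb (fun z => (A z.2, z.1)) (a, j) * prOf pb (fun z => (B z.2, z.1)) (b, j)) := by
          rw [mul_mul_mul_comm, mul_mul_mul_comm lb _ lb]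
          exact mul_div_mul_left _ _ (mul_ne_zero hlb0 hlb0)
        rw [hr]; ring
  calc (∑ a, ∑ b, ∑ c : Fin (ka + kb),
        prOf (mixP la lb pa pb) (fun z => (A z.2, B z.2, z.1)) (a, b, c) *
        Real.logb 2 (prOf (mixP la lb pa pb) (fun z => (A z.2, B z.2, z.1)) (a, b, c) *
            prOf (mixP la lb pa pb) (fun z => z.1) c /
          (prOf (mixP la lb pa pb) (fun z => (A z.2, z.1)) (a, c) *
            prOf (mixP la lb pa pb) (fun z => (B z.2, z.1)) (b, c))))
      = ∑ a, ∑ b, (la * (∑ c : Fin ka, prOf pa (fun z => (A z.2, B z.2, z.1)) (a, b, c) *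
          Real.logb 2 (prOf pa (fun z => (A z.2, B z.2, z.1)) (a, b, c) *
              prOf pa (fun z => z.1) c /
            (prOf pa (fun z => (A z.2, z.1)) (a, c) * prOf pa (fun z => (B z.2, z.1)) (b, c))))
        + lb * (∑ c : Fin kb, prOf pb (fun z => (A z.2, B z.2, z.1)) (a, b, c) *
          Real.logb 2 (prOf pb (fun z => (A z.2, B z.2, z.1)) (a, b, c) *
              prOf pb (fun z => z.1) c /
            (prOf pb (fun z => (A z.2, z.1)) (a, c) * prOf pb (fun z => (B z.2, z.1)) (b, c))))) := by
        exact Finset.sum_congr rfl fun a _ => Finset.sum_congr rfl fun b _ => main a b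
    _ = _ := by
        rw [Finset.sum_congr rfl fun a _ => Finset.sum_add_distrib, Finset.sum_add_distrib]
        congr 1 <;> simp [Finset.mul_sum]

end Mix2


section PointMass
variable {Ω' : Type*} [Fintype Ω']

noncomputable def pointMass (ω₀ : Ω') : Ω' → ℝ := fun ω => if ω = ω₀ then 1 else 0

lemma isPmf_pointMass (ω₀ : Ω') : IsPmf (pointMass ω₀) := by
  unfold pointMass
  constructor
  · intro ω; dsimp only; split <;> norm_num
  · simp [Finset.sum_ite_eq']

lemma prOf_pointMass {α : Type*} (ω₀ : Ω') (A : Ω' → α) (a : α) :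
    prOf (pointMass ω₀) A a = if A ω₀ = a then 1 else 0 := by
  unfold prOf pointMass
  rw [Finset.sum_eq_single_of_mem ω₀ (Finset.mem_univ ω₀)]
  · simp
  · intro x _ hx; split <;> simp [hx]

lemma condMutualInfo_pointMass {α β γ : Type*} [Fintype α] [Fintype β] [Fintype γ]
    (ω₀ : Ω') (A : Ω' → α) (B : Ω' → β) (C : Ω' → γ) :
    condMutualInfo (pointMass ω₀) A B C = 0 := by
  unfold condMutualInfo
  refine Finset.sum_eq_zero fun a _ => Finset.sum_eq_zero fun b _ => Finset.sum_eq_zero fun c _ => ?_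
  rw [prOf_pointMass, prOf_pointMass, prOf_pointMass, prOf_pointMass]
  by_cases h : A ω₀ = a ∧ B ω₀ = b ∧ C ω₀ = c
  · obtain ⟨h1, h2, h3⟩ := h
    simp [h1, h2, h3, Prod.ext_iff]
  · have : ¬ ((fun ω => (A ω, B ω, C ω)) ω₀ = (a, b, c)) := by
      simp only [Prod.ext_iff]; tauto
    simp [this]

end PointMass


variable {𝒳₁ 𝒳₂ 𝒴 : Type} [Fintype 𝒳₁] [Fintype 𝒳₂] [Fintype 𝒴]

/-- Joint distribution of `(U, X₁ⁿ, X₂ⁿ, Yⁿ)` obtained by sending the inputs through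
`n` memoryless uses of the channel `W`. -/
noncomputable def jointWithOutput (W : 𝒳₁ × 𝒳₂ → 𝒴 → ℝ) (n : ℕ) {𝒰 : Type}
    (p : 𝒰 × (Fin n → 𝒳₁) × (Fin n → 𝒳₂) → ℝ) :
    𝒰 × (Fin n → 𝒳₁) × (Fin n → 𝒳₂) × (Fin n → 𝒴) → ℝ :=
  fun z => p (z.1, z.2.1, z.2.2.1) * ∏ t, W (z.2.1 t, z.2.2.1 t) (z.2.2.2 t)


lemma isPmf_jointWithOutput (W : 𝒳₁ × 𝒳₂ → 𝒴 → ℝ) (hW : ∀ x, IsPmf (W x)) (n : ℕ)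
    {𝒰 : Type} [Fintype 𝒰] {p : 𝒰 × (Fin n → 𝒳₁) × (Fin n → 𝒳₂) → ℝ} (hp : IsPmf p) :
    IsPmf (jointWithOutput W n p) := by
  constructor
  · intro z
    exact mul_nonneg (hp.1 _) (Finset.prod_nonneg fun t _ => (hW _).1 _)
  · have hy : ∀ (x1 : Fin n → 𝒳₁) (x2 : Fin n → 𝒳₂),
        ∑ y : Fin n → 𝒴, ∏ t, W (x1 t, x2 t) (y t) = 1 := by
      intro x1 x2
      rw [← Fintype.piFinset_univ, ← Finset.prod_univ_sum]
      rw [Finset.prod_congr rfl fun t _ => (hW (x1 t, x2 t)).2]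
      simp
    have h2 := hp.2
    rw [Fintype.sum_prod_type] at h2
    rw [Fintype.sum_prod_type]
    calc ∑ u, ∑ v : (Fin n → 𝒳₁) × (Fin n → 𝒳₂) × (Fin n → 𝒴), jointWithOutput W n p (u, v)
        = ∑ u, ∑ v : (Fin n → 𝒳₁) × (Fin n → 𝒳₂), p (u, v) := by
          refine Finset.sum_congr rfl fun u _ => ?_
          rw [Fintype.sum_prod_type, Fintype.sum_prod_type]
          refine Finset.sum_congr rfl fun x1 _ => ?_
          rw [Fintype.sum_prod_type]
          refine Finset.sum_congr rfl fun x2 _ => ?_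
          trans (∑ y : Fin n → 𝒴, p (u, x1, x2) * ∏ t, W (x1 t, x2 t) (y t))
          · exact Finset.sum_congr rfl fun y _ => rfl
          · rw [← Finset.mul_sum, hy x1 x2, mul_one]
      _ = 1 := h2

lemma jointWithOutput_mixP (W : 𝒳₁ × 𝒳₂ → 𝒴 → ℝ) (n : ℕ) {ka kb : ℕ} (la lb : ℝ)
    (pa : Fin ka × ((Fin n → 𝒳₁) × (Fin n → 𝒳₂)) → ℝ)
    (pb : Fin kb × ((Fin n → 𝒳₁) × (Fin n → 𝒳₂)) → ℝ) :
    jointWithOutput W n (mixP la lb pa pb)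
      = mixP la lb (jointWithOutput W n pa) (jointWithOutput W n pb) := by
  funext z
  unfold jointWithOutput mixP
  by_cases h : ((z.1 : Fin (ka + kb)) : ℕ) < ka
  · rw [dif_pos h, dif_pos h]; ring
  · rw [dif_neg h, dif_neg h]; ring


/-- The `n`-letter function `σ_n(δ)`: the supremum over all finite auxiliary alphabets
`𝒰` (wlog `Fin k`) and joint distributions `p(u, x₁ⁿ, x₂ⁿ)` with `I(X₁ⁿ;X₂ⁿ|U) ≤ nδ`
of `(1/n)·I(X₁ⁿ,X₂ⁿ;Yⁿ|U)`. -/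
noncomputable def sigman (W : 𝒳₁ × 𝒳₂ → 𝒴 → ℝ) (n : ℕ) (δ : ℝ) : ℝ :=
  sSup {r : ℝ | ∃ (k : ℕ) (p : Fin k × (Fin n → 𝒳₁) × (Fin n → 𝒳₂) → ℝ),
    IsPmf p ∧
    condMutualInfo p (fun z => z.2.1) (fun z => z.2.2) (fun z => z.1) ≤ n * δ ∧
    r = (1 / n) * condMutualInfo (jointWithOutput W n p)
      (fun z => (z.2.1, z.2.2.1)) (fun z => z.2.2.2) (fun z => z.1)}


def sigmaSet (W : 𝒳₁ × 𝒳₂ → 𝒴 → ℝ) (n : ℕ) (δ : ℝ) : Set ℝ :=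
  {r : ℝ | ∃ (k : ℕ) (p : Fin k × (Fin n → 𝒳₁) × (Fin n → 𝒳₂) → ℝ),
    IsPmf p ∧
    condMutualInfo p (fun z => z.2.1) (fun z => z.2.2) (fun z => z.1) ≤ n * δ ∧
    r = (1 / n) * condMutualInfo (jointWithOutput W n p)
      (fun z => (z.2.1, z.2.2.1)) (fun z => z.2.2.2) (fun z => z.1)}

lemma sigman_eq_sSup (W : 𝒳₁ × 𝒳₂ → 𝒴 → ℝ) (n : ℕ) (δ : ℝ) :
    sigman W n δ = sSup (sigmaSet W n δ) := rfl

lemma sigmaSet_ub (W : 𝒳₁ × 𝒳₂ → 𝒴 → ℝ) (hW : ∀ x, IsPmf (W x)) (n : ℕ) (δ : ℝ)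
    {r : ℝ} (hr : r ∈ sigmaSet W n δ) :
    r ≤ (1 / n) * ((Fintype.card (Fin n → 𝒴) : ℝ) / Real.log 2) := by
  obtain ⟨k, p, hp, _, hrv⟩ := hr
  rw [hrv]
  exact mul_le_mul_of_nonneg_left
    (condMutualInfo_le_card (isPmf_jointWithOutput W hW n hp) _ _ _) (by positivity)

lemma sigmaSet_bddAbove (W : 𝒳₁ × 𝒳₂ → 𝒴 → ℝ) (hW : ∀ x, IsPmf (W x)) (n : ℕ) (δ : ℝ) :
    BddAbove (sigmaSet W n δ) :=
  ⟨_, fun _ hr => sigmaSet_ub W hW n δ hr⟩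

lemma sigmaSet_nonempty (W : 𝒳₁ × 𝒳₂ → 𝒴 → ℝ) (n : ℕ) [Nonempty 𝒳₁] [Nonempty 𝒳₂]
    {δ : ℝ} (hδ : 0 ≤ δ) : (sigmaSet W n δ).Nonempty := by
  set ω₀ : Fin 1 × (Fin n → 𝒳₁) × (Fin n → 𝒳₂) :=
    (0, fun _ => Classical.arbitrary 𝒳₁, fun _ => Classical.arbitrary 𝒳₂) with hω₀
  refine ⟨_, 1, pointMass ω₀, isPmf_pointMass ω₀, ?_, rfl⟩
  rw [condMutualInfo_pointMass]
  exact mul_nonneg (Nat.cast_nonneg n) hδ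

lemma sigmaSet_comb (W : 𝒳₁ × 𝒳₂ → 𝒴 → ℝ) (n : ℕ) {x y a b : ℝ}
    (ha : 0 ≤ a) (hb : 0 ≤ b) (hab : a + b = 1) {ra rb : ℝ}
    (hra : ra ∈ sigmaSet W n x) (hrb : rb ∈ sigmaSet W n y) :
    a * ra + b * rb ∈ sigmaSet W n (a * x + b * y) := by
  obtain ⟨ka, pa, hpa, hca, hva⟩ := hra
  obtain ⟨kb, pb, hpb, hcb, hvb⟩ := hrb
  refine ⟨ka + kb, mixP a b pa pb, isPmf_mixP a b pa pb ha hb hab hpa hpb, ?_, ?_⟩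
  · have h1 : condMutualInfo (mixP a b pa pb) (fun z => z.2.1) (fun z => z.2.2) (fun z => z.1)
        = a * condMutualInfo pa (fun z => z.2.1) (fun z => z.2.2) (fun z => z.1)
        + b * condMutualInfo pb (fun z => z.2.1) (fun z => z.2.2) (fun z => z.1) :=
      condMutualInfo_mixP a b pa pb (fun t => t.1) (fun t => t.2)
    rw [h1]
    calc a * condMutualInfo pa (fun z => z.2.1) (fun z => z.2.2) (fun z => z.1)
          + b * condMutualInfo pb (fun z => z.2.1) (fun z => z.2.2) (fun z => z.1)
        ≤ a * (n * x) + b * (n * y) :=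
          add_le_add (mul_le_mul_of_nonneg_left hca ha) (mul_le_mul_of_nonneg_left hcb hb)
      _ = n * (a * x + b * y) := by ring
  · have h2 : jointWithOutput W n (mixP a b pa pb)
        = mixP a b (jointWithOutput W n pa) (jointWithOutput W n pb) :=
      jointWithOutput_mixP W n a b pa pb
    have h3 : condMutualInfo (mixP a b (jointWithOutput W n pa) (jointWithOutput W n pb))
          (fun z => (z.2.1, z.2.2.1)) (fun z => z.2.2.2) (fun z => z.1)
        = a * condMutualInfo (jointWithOutput W n pa)
            (fun z => (z.2.1, z.2.2.1)) (fun z => z.2.2.2) (fun z => z.1)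
        + b * condMutualInfo (jointWithOutput W n pb)
            (fun z => (z.2.1, z.2.2.1)) (fun z => z.2.2.2) (fun z => z.1) :=
      condMutualInfo_mixP a b (jointWithOutput W n pa) (jointWithOutput W n pb)
        (fun t => (t.1, t.2.1)) (fun t => t.2.2)
    rw [h2, h3, hva, hvb]
    ring


/-- Concavity of `σ_n` on `ℝ≥0`. -/
theorem sigman_concave (W : 𝒳₁ × 𝒳₂ → 𝒴 → ℝ) (hW : ∀ x, IsPmf (W x))
    (n : ℕ) (hn : 1 ≤ n) :
    ConcaveOn ℝ (Set.Ici 0) (sigman W n) := by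
  refine ⟨convex_Ici 0, ?_⟩
  intro x hx y hy a b ha hb hab
  simp only [smul_eq_mul]
  by_cases hX1 : Nonempty 𝒳₁
  case neg =>
    haveI : IsEmpty (Fin n → 𝒳₁) := ⟨fun f => hX1 ⟨f ⟨0, hn⟩⟩⟩
    have hzero : ∀ δ : ℝ, sigman W n δ = 0 := by
      intro δ
      rw [sigman_eq_sSup]
      have : sigmaSet W n δ = ∅ := by
        rw [Set.eq_empty_iff_forall_notMem]
        rintro r ⟨k, p, hp, -, -⟩
        have h2 := hp.2
        rw [Finset.univ_eq_empty, Finset.sum_empty] at h2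
        norm_num at h2
      rw [this, Real.sSup_empty]
    rw [hzero, hzero, hzero]
    nlinarith
  by_cases hX2 : Nonempty 𝒳₂
  case neg =>
    haveI : IsEmpty (Fin n → 𝒳₂) := ⟨fun f => hX2 ⟨f ⟨0, hn⟩⟩⟩
    have hzero : ∀ δ : ℝ, sigman W n δ = 0 := by
      intro δ
      rw [sigman_eq_sSup]
      have : sigmaSet W n δ = ∅ := by
        rw [Set.eq_empty_iff_forall_notMem]
        rintro r ⟨k, p, hp, -, -⟩
        have h2 := hp.2
        rw [Finset.univ_eq_empty, Finset.sum_empty] at h2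
        norm_num at h2
      rw [this, Real.sSup_empty]
    rw [hzero, hzero, hzero]
    nlinarith
  -- main case
  rcases eq_or_lt_of_le ha with ha0 | ha'
  · have hb1 : b = 1 := by linarith
    rw [← ha0, hb1]
    norm_num
  rcases eq_or_lt_of_le hb with hb0 | hb'
  · have ha1 : a = 1 := by linarith
    rw [← hb0, ha1]
    norm_num
  have hxne : (sigmaSet W n x).Nonempty := sigmaSet_nonempty W n hx
  have hyne : (sigmaSet W n y).Nonempty := sigmaSet_nonempty W n hy
  set M := sSup (sigmaSet W n (a * x + b * y)) with hM
  have hMem : ∀ ra ∈ sigmaSet W n x, ∀ rb ∈ sigmaSet W n y, a * ra + b * rb ≤ M :=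
    fun ra hra rb hrb => le_csSup (sigmaSet_bddAbove W hW n _)
      (sigmaSet_comb W n ha hb hab hra hrb)
  have step1 : ∀ rb ∈ sigmaSet W n y, sSup (sigmaSet W n x) ≤ (M - b * rb) / a := by
    intro rb hrb
    refine csSup_le hxne fun ra hra => ?_
    rw [le_div_iff₀ ha']
    have := hMem ra hra rb hrb
    linarith
  have step2 : sSup (sigmaSet W n y) ≤ (M - a * sSup (sigmaSet W n x)) / b := by
    refine csSup_le hyne fun rb hrb => ?_
    rw [le_div_iff₀ hb']
    have h1 := (le_div_iff₀ ha').1 (step1 rb hrb)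
    linarith
  have h2 := (le_div_iff₀ hb').1 step2
  rw [sigman_eq_sSup, sigman_eq_sSup, sigman_eq_sSup]
  linarith
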